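/- arXiv:2006.02688 — 2 statements merged into one kernel-verified Lean document; each statement's English description precedes it below -/
import Mathlib

section
/- Let A, C be n×n real matrices and define C_0 = C, C_{i+1} = C_i A + Aᵀ C_i. If A^k = 0 for some natural number k ≥ 1, then C_m = 0 where m = 2k - 1. -/
/-!
The recursion is `C_{i+1} = (L + R) C_i` for the commuting operators `L X = Aᵀ X` and
`R X = X A` on matrices. Both are nilpotent of index `k`, since `Lᵏ X = (Aᵏ)ᵀ X` and
`Rᵏ X = X Aᵏ`, so their sum is nilpotent of index `2k - 1` by the binomial theorem.
-/

open Matrix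

namespace LinearMap

variable {R : Type*} [Semiring R]

theorem eq_pow_mulLeft_add_mulRight_apply {a b : R} {x : ℕ → R}
    (hx : ∀ i, x (i + 1) = x i * a + b * x i) (m : ℕ) :
    x m = ((mulLeft ℕ b + mulRight ℕ a) ^ m) (x 0) := by
  induction m with
  | zero => rfl
  | succ m ih => rw [hx, ih, pow_succ', Module.End.mul_apply, add_apply, mulLeft_apply,
      mulRight_apply, add_comm]

theorem pow_mulLeft_add_mulRight_eq_zero {a b : R} {k l : ℕ} (ha : a ^ k = 0) (hb : b ^ l = 0) :
    (mulLeft ℕ b + mulRight ℕ a) ^ (l + k - 1) = 0 :=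
  (commute_mulLeft_right b a).add_pow_add_eq_zero_of_pow_eq_zero
    (by rw [pow_mulLeft, hb, mulLeft_zero_eq_zero]) (by rw [pow_mulRight, ha, mulRight_zero_eq_zero])

end LinearMap

theorem Cm_eq_zero_of_nilpotent_general (n : ℕ) (A : Matrix (Fin n) (Fin n) ℝ)
    (Cseq : ℕ → Matrix (Fin n) (Fin n) ℝ)
    (hrec : ∀ i, Cseq (i + 1) = Cseq i * A + Aᵀ * Cseq i)
    (k : ℕ) (hA : A ^ k = 0) :
    Cseq (2 * k - 1) = 0 := by
  have hAT : Aᵀ ^ k = 0 := by rw [← transpose_pow, hA, transpose_zero]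
  rw [LinearMap.eq_pow_mulLeft_add_mulRight_apply hrec, two_mul,
    LinearMap.pow_mulLeft_add_mulRight_eq_zero hA hAT, LinearMap.zero_apply]

theorem Cm_eq_zero_of_nilpotent (n : ℕ) (A C : Matrix (Fin n) (Fin n) ℝ)
    (Cseq : ℕ → Matrix (Fin n) (Fin n) ℝ)
    (h0 : Cseq 0 = C)
    (hrec : ∀ i, Cseq (i + 1) = Cseq i * A + Aᵀ * Cseq i)
    (k : ℕ) (hk : 1 ≤ k) (hA : A ^ k = 0) :
    Cseq (2 * k - 1) = 0 :=
  Cm_eq_zero_of_nilpotent_general n A Cseq hrec k hA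
end

section
/- Let x : ℝ → ℝ^n satisfy ẋ = Ax + Bu(t), let C be symmetric with C_m = 0 (where C_0 = C, C_{i+1} = C_i A + Aᵀ C_i), and define z_i(t) = (1/2) x(t)ᵀ C_i x(t) for i = 0,…,m-1. Then ż_i = z_{i+1} + u(t)ᵀ Bᵀ C_i x(t) for i = 0,…,m-2 and ż_{m-1} = u(t)ᵀ Bᵀ C_{m-1} x(t). -/
/-! Along the system, `d/dt xᵀ M x = xᵀ (M A + Aᵀ M) x + 2 uᵀ Bᵀ M x` for symmetric `M`. The
recursion `C_{i+1} = C_i A + Aᵀ C_i` preserves symmetry, so this applies to every `C_i`, and the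
drift term of `z_i` is exactly `z_{i+1}`; for `i = m - 1` it vanishes because `C_m = 0`. -/

open Matrix

section Derivatives

variable {𝕜 : Type*} [NontriviallyNormedField 𝕜] {ι κ : Type*} [Fintype ι]
  {f g : 𝕜 → ι → 𝕜} {f' g' : ι → 𝕜} {t : 𝕜}

theorem HasDerivAt.dotProduct (hf : HasDerivAt f f' t) (hg : HasDerivAt g g' t) :
    HasDerivAt (fun s => f s ⬝ᵥ g s) (f' ⬝ᵥ g t + f t ⬝ᵥ g') t := by
  have hsum := HasDerivAt.fun_sum fun i (_ : i ∈ Finset.univ) =>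
    (hasDerivAt_pi.mp hf i).mul (hasDerivAt_pi.mp hg i)
  rw [Finset.sum_add_distrib] at hsum
  exact hsum

theorem HasDerivAt.mulVec (M : Matrix κ ι 𝕜) (hf : HasDerivAt f f' t) :
    HasDerivAt (fun s => M *ᵥ f s) (M *ᵥ f') t :=
  hasDerivAt_pi.mpr fun i => by
    have hrow := (hasDerivAt_const t (M i)).dotProduct hf
    rw [zero_dotProduct, zero_add] at hrow
    exact hrow

end Derivatives

namespace Matrix

variable {R : Type*} [CommSemiring R] {ι κ : Type*} [Fintype ι] [Fintype κ]

theorem IsSymm.dotProduct_mulVec_comm {M : Matrix ι ι R} (hM : M.IsSymm) (v w : ι → R) :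
    v ⬝ᵥ M *ᵥ w = w ⬝ᵥ M *ᵥ v := by
  rw [dotProduct_mulVec, ← mulVec_transpose, hM.eq, dotProduct_comm]

theorem IsSymm.mul_add_transpose_mul {M : Matrix ι ι R} (hM : M.IsSymm) (A : Matrix ι ι R) :
    (M * A + Aᵀ * M).IsSymm := by
  simpa only [transpose_mul, hM.eq] using isSymm_add_transpose_self (M * A)

theorem dotProduct_transpose_mul_mulVec (B : Matrix ι κ R) (M : Matrix ι ι R) (u : κ → R)
    (v : ι → R) : u ⬝ᵥ (Bᵀ * M) *ᵥ v = B *ᵥ u ⬝ᵥ M *ᵥ v := by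
  rw [← mulVec_mulVec, dotProduct_mulVec, vecMul_transpose]

end Matrix

theorem Matrix.IsSymm.hasDerivAt_half_quadForm {n p : Type*} [Fintype n] [Fintype p]
    {M A : Matrix n n ℝ} {B : Matrix n p ℝ} (hM : M.IsSymm) {x : ℝ → n → ℝ} {u : p → ℝ}
    {t : ℝ} (hx : HasDerivAt x (A *ᵥ x t + B *ᵥ u) t) :
    HasDerivAt (fun s => (1 / 2 : ℝ) * (x s ⬝ᵥ M *ᵥ x s))
      ((1 / 2 : ℝ) * (x t ⬝ᵥ (M * A + Aᵀ * M) *ᵥ x t) + u ⬝ᵥ (Bᵀ * M) *ᵥ x t) t := by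
  refine ((hx.dotProduct (hx.mulVec M)).const_mul (1 / 2 : ℝ)).congr_deriv ?_
  rw [hM.dotProduct_mulVec_comm (x t) (A *ᵥ x t + B *ᵥ u), add_mulVec, dotProduct_add,
    dotProduct_transpose_mul_mulVec, dotProduct_transpose_mul_mulVec, ← mulVec_mulVec,
    hM.dotProduct_mulVec_comm (x t) (A *ᵥ x t), add_dotProduct]
  ring

theorem augmented_state_dynamics_general (n p m : ℕ) (hm : 0 < m)
    (A C : Matrix (Fin n) (Fin n) ℝ) (B : Matrix (Fin n) (Fin p) ℝ)
    (hC : C.IsSymm)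
    (Cseq : ℕ → Matrix (Fin n) (Fin n) ℝ)
    (h0 : Cseq 0 = C)
    (hrec : ∀ i, Cseq (i + 1) = Cseq i * A + Aᵀ * Cseq i)
    (hCm : Cseq m = 0)
    (u : ℝ → Fin p → ℝ)
    (x : ℝ → Fin n → ℝ)
    (hx : ∀ t, HasDerivAt x (A.mulVec (x t) + B.mulVec (u t)) t) :
    (∀ i, i + 2 ≤ m → ∀ t,
        HasDerivAt (fun s => (1 / 2 : ℝ) * (x s ⬝ᵥ (Cseq i).mulVec (x s)))
          ((1 / 2 : ℝ) * (x t ⬝ᵥ (Cseq (i + 1)).mulVec (x t))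
            + u t ⬝ᵥ (Bᵀ * Cseq i).mulVec (x t)) t) ∧
    (∀ t, HasDerivAt (fun s => (1 / 2 : ℝ) * (x s ⬝ᵥ (Cseq (m - 1)).mulVec (x s)))
          (u t ⬝ᵥ (Bᵀ * Cseq (m - 1)).mulVec (x t)) t) := by
  have hsymm : ∀ i, (Cseq i).IsSymm := by
    intro i
    induction i with
    | zero => exact h0 ▸ hC
    | succ k ih => exact hrec k ▸ ih.mul_add_transpose_mul A
  have hderiv : ∀ i t,
      HasDerivAt (fun s => (1 / 2 : ℝ) * (x s ⬝ᵥ (Cseq i) *ᵥ x s))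
        ((1 / 2 : ℝ) * (x t ⬝ᵥ Cseq (i + 1) *ᵥ x t) + u t ⬝ᵥ (Bᵀ * Cseq i) *ᵥ x t) t :=
    fun i t => hrec i ▸ (hsymm i).hasDerivAt_half_quadForm (hx t)
  refine ⟨fun i _ t => hderiv i t, fun t => ?_⟩
  simpa only [Nat.sub_add_cancel hm, hCm, zero_mulVec, dotProduct_zero, mul_zero, zero_add]
    using hderiv (m - 1) t

theorem augmented_state_dynamics (n p m : ℕ) (hm : 0 < m)
    (A C : Matrix (Fin n) (Fin n) ℝ) (B : Matrix (Fin n) (Fin p) ℝ)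
    (hC : C.IsSymm)
    (Cseq : ℕ → Matrix (Fin n) (Fin n) ℝ)
    (h0 : Cseq 0 = C)
    (hrec : ∀ i, Cseq (i + 1) = Cseq i * A + Aᵀ * Cseq i)
    (hCm : Cseq m = 0)
    (u : ℝ → Fin p → ℝ) (hu : Continuous u)
    (x : ℝ → Fin n → ℝ)
    (hx : ∀ t, HasDerivAt x (A.mulVec (x t) + B.mulVec (u t)) t) :
    (∀ i, i + 2 ≤ m → ∀ t,
        HasDerivAt (fun s => (1 / 2 : ℝ) * (x s ⬝ᵥ (Cseq i).mulVec (x s)))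
          ((1 / 2 : ℝ) * (x t ⬝ᵥ (Cseq (i + 1)).mulVec (x t))
            + u t ⬝ᵥ (Bᵀ * Cseq i).mulVec (x t)) t) ∧
    (∀ t, HasDerivAt (fun s => (1 / 2 : ℝ) * (x s ⬝ᵥ (Cseq (m - 1)).mulVec (x s)))
          (u t ⬝ᵥ (Bᵀ * Cseq (m - 1)).mulVec (x t)) t) :=
  augmented_state_dynamics_general n p m hm A C B hC Cseq h0 hrec hCm u x hx
end
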